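/- arXiv:1302.6202 — 5 statements merged into one kernel-verified Lean document; each statement's English description precedes it below -/
import Mathlib

section
/- Let m and d be integers with 1 ≤ d ≤ m − 1, and let S ⊆ {0, 1, …, m−1} be the set S = { ⌊a·m/d⌋ − [a = d] : 0 ≤ a ≤ d }, where [a = d] equals 1 if a = d and 0 otherwise. Then for every subset T ⊆ {0, 1, …, m−1} one has m·|S ∩ T| ≤ d·|T| + m·c(T), where c(T) = |{ t ∈ T : t − 1 ∉ T }| is the number of clusters (maximal runs of consecutive integers) of T. -/
/-- Key spacing lemma: for `0 ≤ p ≤ q ≤ d`, the values `f p, f q` of the map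
defining `S` satisfy `(q - p) * m ≤ d * (f q - f p) + d`. -/
lemma key_spacing (m d : ℤ) (hd : 1 ≤ d) (p q : ℤ) (hp : 0 ≤ p) (hpq : p ≤ q)
    (hq : q ≤ d) :
    (q - p) * m ≤
      d * ((q * m / d - if q = d then 1 else 0) - (p * m / d - if p = d then 1 else 0)) + d := by
  have hd0 : d ≠ 0 := by omega
  have h1 := Int.mul_ediv_add_emod (q * m) d
  have h2 := Int.mul_ediv_add_emod (p * m) d
  have h3 : 0 ≤ q * m % d := Int.emod_nonneg _ hd0
  have h4 : q * m % d < d := Int.emod_lt_of_pos _ (by omega)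
  have h5 : 0 ≤ p * m % d := Int.emod_nonneg _ hd0
  have h6 : p * m % d < d := Int.emod_lt_of_pos _ (by omega)
  by_cases hqd : q = d
  · by_cases hpd : p = d
    · rw [hpd, hqd]; nlinarith [hd]
    · rw [hqd]
      simp only [if_pos rfl, if_true, eq_self_iff_true, if_neg hpd]
      have hdm : d * m / d = m := Int.mul_ediv_cancel_left _ hd0
      rw [hdm]
      have e2 : d * (p * m / d) = p * m - p * m % d := by omega
      nlinarith [e2, h5]
  · have hpd : p ≠ d := by omega
    simp only [if_neg hqd, if_neg hpd]
    have e1 : d * (q * m / d) = q * m - q * m % d := by omega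
    have e2 : d * (p * m / d) = p * m - p * m % d := by omega
    nlinarith [e1, e2]

/-- Cluster bound: the interval `[a, b]` contains few points of `S`. -/
lemma cluster_bound (m d : ℤ) (hd : 1 ≤ d) (hdm : d ≤ m - 1) (a b : ℤ) (hab : a ≤ b) :
    m * (((((Finset.Icc (0 : ℤ) d).image (fun a => a * m / d - if a = d then 1 else 0))
        ∩ Finset.Icc a b)).card : ℤ) ≤ d * (b - a + 1) + m := by
  have hm : 2 ≤ m := by omega
  set f : ℤ → ℤ := fun a => a * m / d - if a = d then 1 else 0 with hf
  set A : Finset ℤ := (Finset.Icc (0 : ℤ) d).filter (fun x => f x ∈ Finset.Icc a b) with hA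
  have hsub : ((Finset.Icc (0 : ℤ) d).image f ∩ Finset.Icc a b) ⊆ A.image f := by
    intro s hs
    rw [Finset.mem_inter, Finset.mem_image] at hs
    obtain ⟨⟨x, hx, hxs⟩, hs2⟩ := hs
    exact Finset.mem_image.2 ⟨x, Finset.mem_filter.2 ⟨hx, by rw [hxs]; exact hs2⟩, hxs⟩
  have hcard : (((Finset.Icc (0 : ℤ) d).image f ∩ Finset.Icc a b)).card ≤ A.card :=
    le_trans (Finset.card_le_card hsub) Finset.card_image_le
  have hdba : 0 ≤ d * (b - a + 1) := by
    have : (0:ℤ) ≤ b - a + 1 := by omega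
    positivity
  rcases A.eq_empty_or_nonempty with hAe | hAne
  · have h0 : A.card = 0 := by rw [hAe]; rfl
    have hc0 : (((Finset.Icc (0 : ℤ) d).image f ∩ Finset.Icc a b)).card = 0 := by omega
    rw [hc0]
    push_cast
    linarith
  · set p := A.min' hAne with hp
    set q := A.max' hAne with hq
    have hpA : p ∈ A := A.min'_mem hAne
    have hqA : q ∈ A := A.max'_mem hAne
    have hpI := Finset.mem_filter.1 hpA
    have hqI := Finset.mem_filter.1 hqA
    rw [Finset.mem_Icc] at hpI hqI
    have hfp := hpI.2
    have hfq := hqI.2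
    rw [Finset.mem_Icc] at hfp hfq
    have hpq : p ≤ q := A.min'_le q hqA
    -- |A| ≤ q - p + 1
    have hAsub : A ⊆ Finset.Icc p q := by
      intro x hx
      exact Finset.mem_Icc.2 ⟨A.min'_le x hx, A.le_max' x hx⟩
    have hAc : (A.card : ℤ) ≤ q - p + 1 := by
      have := Finset.card_le_card hAsub
      rw [Int.card_Icc] at this
      have h2 : ((q + 1 - p).toNat : ℤ) = q + 1 - p := Int.toNat_of_nonneg (by omega)
      omega
    have hkey := key_spacing m d hd p q hpI.1.1 hpq hqI.1.2
    have hfdiff : f q - f p ≤ b - a := by omega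
    have hmono : d * (f q - f p) ≤ d * (b - a) := by
      apply mul_le_mul_of_nonneg_left hfdiff (by omega)
    have hkey' : (q - p) * m ≤ d * (b - a) + d := by
      have heq : d * ((q * m / d - if q = d then 1 else 0) - (p * m / d - if p = d then 1 else 0))
          = d * (f q - f p) := rfl
      rw [heq] at hkey
      linarith
    have hcardZ : ((((Finset.Icc (0 : ℤ) d).image f ∩ Finset.Icc a b)).card : ℤ)
        ≤ q - p + 1 := by
      have : ((((Finset.Icc (0 : ℤ) d).image f ∩ Finset.Icc a b)).card : ℤ) ≤ (A.card : ℤ) := by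
        exact_mod_cast hcard
      linarith
    calc m * ((((Finset.Icc (0 : ℤ) d).image f ∩ Finset.Icc a b)).card : ℤ)
        ≤ m * (q - p + 1) := by
          apply mul_le_mul_of_nonneg_left hcardZ (by omega)
      _ = (q - p) * m + m := by ring
      _ ≤ d * (b - a) + d + m := by linarith
      _ = d * (b - a + 1) + m := by ring

/-- Inequality (6.22) of the paper: for `1 ≤ d ≤ m - 1`, with
`S = { ⌊a·m/d⌋ - [a = d] : 0 ≤ a ≤ d }`, every subset `T ⊆ {0, …, m-1}` satisfies
`m·|S ∩ T| ≤ d·|T| + m·c(T)`, where `c(T)` is the number of clusters of `T`. -/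
theorem stmt0 (m d : ℤ) (hd : 1 ≤ d) (hdm : d ≤ m - 1)
    (S : Finset ℤ)
    (hS : S = (Finset.Icc (0 : ℤ) d).image (fun a => a * m / d - if a = d then 1 else 0)) :
    ∀ T ⊆ Finset.Icc (0 : ℤ) (m - 1),
      m * ((S ∩ T).card : ℤ) ≤
        d * (T.card : ℤ) + m * ((T.filter (fun t => t - 1 ∉ T)).card : ℤ) := by
  subst hS
  set f : ℤ → ℤ := fun a => a * m / d - if a = d then 1 else 0 with hf
  set S := (Finset.Icc (0 : ℤ) d).image f with hSdef
  intro T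
  induction T using Finset.strongInduction with
  | _ T ih =>
    intro hT
    rcases T.eq_empty_or_nonempty with rfl | hne
    · simp
    · have hm : 2 ≤ m := by omega
      set a := T.min' hne with ha
      have haT : a ∈ T := T.min'_mem hne
      have haI := hT haT
      rw [Finset.mem_Icc] at haI
      set B : Finset ℤ := (Finset.Icc a (m - 1)).filter (fun x => x + 1 ∉ T) with hB
      have hBne : B.Nonempty := by
        refine ⟨m - 1, Finset.mem_filter.2 ⟨Finset.mem_Icc.2 ⟨haI.2, le_refl _⟩, ?_⟩⟩
        intro hmem
        have := hT hmem
        rw [Finset.mem_Icc] at this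
        omega
      set b := B.min' hBne with hb
      have hbB : b ∈ B := B.min'_mem hBne
      have hbB' := Finset.mem_filter.1 hbB
      rw [Finset.mem_Icc] at hbB'
      obtain ⟨⟨hab, hbm⟩, hb1⟩ := hbB'
      -- every x in [a, b] lies in T
      have hsubT : ∀ x, a ≤ x → x ≤ b → x ∈ T := by
        intro x hax hxb
        by_contra hx
        have hax' : a < x := by
          rcases eq_or_lt_of_le hax with rfl | h
          · exact absurd haT hx
          · exact h
        have hxB : x - 1 ∈ B := by
          refine Finset.mem_filter.2 ⟨Finset.mem_Icc.2 ⟨by omega, by omega⟩, ?_⟩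
          have : x - 1 + 1 = x := by ring
          rw [this]; exact hx
        have := B.min'_le _ hxB
        omega
      set C := Finset.Icc a b with hC
      set T' := T \ C with hT'
      have hCT : C ⊆ T := by
        intro x hx
        rw [hC, Finset.mem_Icc] at hx
        exact hsubT x hx.1 hx.2
      have hCne : C.Nonempty := ⟨a, Finset.mem_Icc.2 ⟨le_refl _, hab⟩⟩
      have hTsplit : T' ∪ C = T := Finset.sdiff_union_of_subset hCT
      have hdisj : Disjoint T' C := Finset.sdiff_disjoint
      have hCcard : (C.card : ℤ) = b - a + 1 := by
        rw [hC, Int.card_Icc]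
        have : ((b + 1 - a).toNat : ℤ) = b + 1 - a := Int.toNat_of_nonneg (by omega)
        omega
      have hTcard : (T.card : ℤ) = (T'.card : ℤ) + (b - a + 1) := by
        have := Finset.card_union_of_disjoint hdisj
        rw [hTsplit] at this
        push_cast [this]
        omega
      -- split S ∩ T
      have hSinter : S ∩ T = (S ∩ T') ∪ (S ∩ C) := by
        rw [← hTsplit, Finset.inter_union_distrib_left]
      have hSdisj : Disjoint (S ∩ T') (S ∩ C) :=
        hdisj.mono Finset.inter_subset_right Finset.inter_subset_right
      have hScard : ((S ∩ T).card : ℤ) = ((S ∩ T').card : ℤ) + ((S ∩ C).card : ℤ) := by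
        rw [hSinter, Finset.card_union_of_disjoint hSdisj]
        push_cast
        ring
      -- cluster starts
      have hstart : T.filter (fun t => t - 1 ∉ T)
          = insert a (T'.filter (fun t => t - 1 ∉ T')) := by
        ext t
        constructor
        · intro ht
          rw [Finset.mem_filter] at ht
          obtain ⟨htT, ht1⟩ := ht
          rw [Finset.mem_insert]
          by_cases hta : t = a
          · exact Or.inl hta
          · right
            have hat : a ≤ t := T.min'_le t htT
            have hbt : b < t := by
              by_contra hle
              push_neg at hle
              exact ht1 (hsubT (t - 1) (by omega) (by omega))
            rw [Finset.mem_filter]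
            constructor
            · rw [hT', Finset.mem_sdiff]
              refine ⟨htT, ?_⟩
              rw [hC, Finset.mem_Icc]
              omega
            · rw [hT', Finset.mem_sdiff]
              rintro ⟨h1, _⟩
              exact ht1 h1
        · intro ht
          rw [Finset.mem_insert] at ht
          rw [Finset.mem_filter]
          rcases ht with rfl | ht
          · refine ⟨haT, fun h => ?_⟩
            have := T.min'_le _ h
            omega
          · rw [Finset.mem_filter] at ht
            obtain ⟨htT', ht'⟩ := ht
            rw [hT', Finset.mem_sdiff] at htT'
            obtain ⟨htT, htC⟩ := htT'
            rw [hC, Finset.mem_Icc] at htC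
            have hat : a ≤ t := T.min'_le t htT
            have hbt : b < t := by
              by_contra h
              push_neg at h
              exact htC ⟨hat, h⟩
            have htb1 : t ≠ b + 1 := fun h => hb1 (h ▸ htT)
            refine ⟨htT, fun h1 => ht' ?_⟩
            rw [hT', Finset.mem_sdiff]
            refine ⟨h1, ?_⟩
            rw [hC, Finset.mem_Icc]
            omega
      have haC : a ∉ T'.filter (fun t => t - 1 ∉ T') := by
        intro h
        have := (Finset.mem_filter.1 h).1
        rw [hT', Finset.mem_sdiff] at this
        exact this.2 (Finset.mem_Icc.2 ⟨le_refl _, hab⟩)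
      have hfiltcard : ((T.filter (fun t => t - 1 ∉ T)).card : ℤ)
          = ((T'.filter (fun t => t - 1 ∉ T')).card : ℤ) + 1 := by
        rw [hstart, Finset.card_insert_of_notMem haC]
        push_cast
        ring
      -- induction hypothesis on T'
      have hss : T' ⊂ T := Finset.sdiff_ssubset hCT hCne
      have hT'sub : T' ⊆ Finset.Icc (0 : ℤ) (m - 1) :=
        le_trans (Finset.sdiff_subset) hT
      have hIH := ih T' hss hT'sub
      have hCB := cluster_bound m d hd hdm a b hab
      rw [hScard, hTcard, hfiltcard]
      have hCB' : m * ((S ∩ C).card : ℤ) ≤ d * (b - a + 1) + m := hCB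
      linarith
end

section
/- Let m and d be integers with 1 ≤ d ≤ m − 1, let S = { ⌊a·m/d⌋ − [a = d] : 0 ≤ a ≤ d } ⊆ {0, …, m−1}, and let T ⊆ {0, 1, …, m−1} be a nonempty subset. Then equality m·|S ∩ T| = d·|T| + m·c(T) (where c(T) = |{ t ∈ T : t − 1 ∉ T }|) holds if and only if T = {k, k+1, …, m−1} for some integer 0 ≤ k ≤ m−1 such that m divides d·k. -/
open Finset

/-- Counting function: `Fc m d t + 1` is the number of `a ∈ [0,d]` with `v a ≤ t`. -/
private def Fc (m d t : ℤ) : ℤ := if t = m - 1 then d else ((t + 1) * d - 1) / m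

private lemma Fc_lb (m d : ℤ) (hd : 1 ≤ d) (hdm : d ≤ m - 1) {t : ℤ} (ht : -1 ≤ t) :
    -1 ≤ Fc m d t := by
  unfold Fc
  split
  · omega
  · rw [Int.le_ediv_iff_mul_le (by omega : (0:ℤ) < m)]
    nlinarith

private lemma Fc_ub (m d : ℤ) (hd : 1 ≤ d) (hdm : d ≤ m - 1) {t : ℤ} (ht : t ≤ m - 1) :
    Fc m d t ≤ d := by
  unfold Fc
  split
  · exact le_refl d
  · have h : ((t + 1) * d - 1) / m < d := by
      rw [Int.ediv_lt_iff_lt_mul (by omega : (0:ℤ) < m)]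
      nlinarith
    omega

private lemma Fc_mono (m d : ℤ) (hd : 1 ≤ d) (hdm : d ≤ m - 1) {t₁ t₂ : ℤ}
    (h12 : t₁ ≤ t₂) (h2 : t₂ ≤ m - 1) : Fc m d t₁ ≤ Fc m d t₂ := by
  unfold Fc
  split_ifs with ha hb hb
  · exact le_refl d
  · exfalso; omega
  · have h : ((t₁ + 1) * d - 1) / m < d := by
      rw [Int.ediv_lt_iff_lt_mul (by omega : (0:ℤ) < m)]
      nlinarith
    omega
  · exact Int.ediv_le_ediv (by omega) (by nlinarith)

private lemma filter_le_eq (m d : ℤ) (hd : 1 ≤ d) (hdm : d ≤ m - 1) (t : ℤ) (ht2 : t ≤ m - 1) :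
    (Icc (0:ℤ) d).filter
        (fun a => (a * m / d - if a = d then (1:ℤ) else 0) ≤ t) = Icc 0 (Fc m d t) := by
  have hm : (0:ℤ) < m := by omega
  have hd0 : (0:ℤ) < d := by omega
  by_cases htm : t = m - 1
  · have hF : Fc m d t = d := by simp [Fc, htm]
    rw [hF]
    ext a
    simp only [mem_filter, mem_Icc]
    constructor
    · rintro ⟨h, _⟩; exact h
    · rintro ⟨h0, h1⟩
      refine ⟨⟨h0, h1⟩, ?_⟩
      by_cases had : a = d
      · rw [if_pos had, had, Int.mul_ediv_cancel_left m (by omega : d ≠ 0)]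
        omega
      · rw [if_neg had]
        have h2 : a * m / d < m - 1 := by
          rw [Int.ediv_lt_iff_lt_mul hd0]
          nlinarith [mul_le_mul_of_nonneg_right (show a ≤ d - 1 by omega) (le_of_lt hm)]
        linarith
  · have hF : Fc m d t = ((t + 1) * d - 1) / m := by simp [Fc, htm]
    have htm2 : t ≤ m - 2 := by omega
    rw [hF]
    ext a
    simp only [mem_filter, mem_Icc]
    constructor
    · rintro ⟨⟨h0, h1⟩, hv⟩
      by_cases had : a = d
      · exfalso
        rw [if_pos had, had, Int.mul_ediv_cancel_left m (by omega : d ≠ 0)] at hv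
        omega
      · rw [if_neg had] at hv
        refine ⟨h0, ?_⟩
        rw [Int.le_ediv_iff_mul_le hm]
        have hlt : a * m < (t + 1) * d := by
          by_contra hc
          push_neg at hc
          have h2 : t + 1 ≤ a * m / d := by
            rw [Int.le_ediv_iff_mul_le hd0]; linarith
          linarith
        linarith
    · rintro ⟨h0, h1⟩
      have hf : ((t + 1) * d - 1) / m ≤ d - 1 := by
        have h : ((t + 1) * d - 1) / m < d := by
          rw [Int.ediv_lt_iff_lt_mul hm]
          nlinarith
        omega
      have had : a ≤ d - 1 := le_trans h1 hf
      have hne : a ≠ d := by omega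
      rw [if_neg hne]
      refine ⟨⟨h0, by omega⟩, ?_⟩
      have ham : a * m ≤ (t + 1) * d - 1 := (Int.le_ediv_iff_mul_le hm).mp h1
      have h2 : a * m / d < t + 1 := by
        rw [Int.ediv_lt_iff_lt_mul hd0]; linarith
      linarith

private lemma card_inter_Icc (m d : ℤ) (hd : 1 ≤ d) (hdm : d ≤ m - 1) (S : Finset ℤ)
    (hS : S = (Finset.Icc (0 : ℤ) d).image (fun a => a * m / d - if a = d then 1 else 0))
    {x y : ℤ} (hx : 0 ≤ x) (hxy : x ≤ y) (hy : y ≤ m - 1) :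
    ((S ∩ Icc x y).card : ℤ) = Fc m d y - Fc m d (x - 1) := by
  have hm : (0:ℤ) < m := by omega
  have hd0 : (0:ℤ) < d := by omega
  have hmono : ∀ a b : ℤ, 0 ≤ a → a < b → b ≤ d →
      (a * m / d - if a = d then (1:ℤ) else 0) < (b * m / d - if b = d then (1:ℤ) else 0) := by
    intro a b ha hab hbd
    by_cases hbd' : b = d
    · rw [if_pos hbd', hbd', if_neg (by omega : a ≠ d),
        Int.mul_ediv_cancel_left m (by omega : d ≠ 0)]
      have h2 : a * m / d < m - 1 := by
        rw [Int.ediv_lt_iff_lt_mul hd0]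
        nlinarith [mul_le_mul_of_nonneg_right (show a ≤ d - 1 by omega) (le_of_lt hm)]
      linarith
    · rw [if_neg hbd', if_neg (by omega : a ≠ d)]
      have e : (a * m + 1 * d) / d = a * m / d + 1 := Int.add_mul_ediv_right _ _ (by omega)
      have h3 : (a * m + 1 * d) / d ≤ b * m / d := by
        apply Int.ediv_le_ediv hd0
        nlinarith
      linarith
  have hinj : Set.InjOn (fun a => a * m / d - if a = d then (1:ℤ) else 0) (Icc (0:ℤ) d) := by
    intro a ha b hb hab
    simp only [coe_Icc, Set.mem_Icc] at ha hb
    rcases lt_trichotomy a b with h | h | h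
    · exact absurd hab (ne_of_lt (hmono a b ha.1 h hb.2))
    · exact h
    · exact absurd hab.symm (ne_of_lt (hmono b a hb.1 h ha.2))
  have key : S ∩ Icc x y =
      ((Icc (0:ℤ) d).filter
        (fun a => (a * m / d - if a = d then (1:ℤ) else 0) ∈ Icc x y)).image
        (fun a => a * m / d - if a = d then (1:ℤ) else 0) := by
    rw [hS, ← Finset.filter_mem_eq_inter, Finset.filter_image]
  have hsplit : (Icc (0:ℤ) d).filter
        (fun a => (a * m / d - if a = d then (1:ℤ) else 0) ∈ Icc x y)
      = ((Icc (0:ℤ) d).filter (fun a => (a * m / d - if a = d then (1:ℤ) else 0) ≤ y)) \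
        ((Icc (0:ℤ) d).filter (fun a => (a * m / d - if a = d then (1:ℤ) else 0) ≤ x - 1)) := by
    ext a
    simp only [mem_filter, mem_sdiff, mem_Icc, not_and]
    constructor
    · rintro ⟨h, h1', h2'⟩
      exact ⟨⟨h, h2'⟩, fun _ hc => by linarith⟩
    · rintro ⟨⟨h, h1'⟩, h2'⟩
      refine ⟨h, ?_, h1'⟩
      have := h2' h
      linarith
  have h1 := filter_le_eq m d hd hdm y hy
  have h2 := filter_le_eq m d hd hdm (x - 1) (by omega)
  have hFx := Fc_lb m d hd hdm (t := x - 1) (by omega)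
  have hFy := Fc_lb m d hd hdm (t := y) (by omega)
  have hmono2 : Fc m d (x - 1) ≤ Fc m d y := Fc_mono m d hd hdm (by omega) hy
  have hsub : ((Icc (0:ℤ) d).filter (fun a => (a * m / d - if a = d then (1:ℤ) else 0) ≤ x - 1))
      ⊆ ((Icc (0:ℤ) d).filter (fun a => (a * m / d - if a = d then (1:ℤ) else 0) ≤ y)) := by
    rw [h1, h2]
    exact Icc_subset_Icc_right hmono2
  have hcards : ((Icc (0:ℤ) d).filter
        (fun a => (a * m / d - if a = d then (1:ℤ) else 0) ≤ x - 1)).card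
      ≤ ((Icc (0:ℤ) d).filter (fun a => (a * m / d - if a = d then (1:ℤ) else 0) ≤ y)).card :=
    Finset.card_le_card hsub
  rw [key, Finset.card_image_of_injOn (hinj.mono (by exact_mod_cast Finset.filter_subset _ _)),
    hsplit, Finset.card_sdiff_of_subset hsub]
  rw [Nat.cast_sub hcards, h1, h2, Int.card_Icc, Int.card_Icc,
    Int.toNat_of_nonneg (by omega), Int.toNat_of_nonneg (by omega)]
  ring

private lemma cluster_ineq (m d : ℤ) (hd : 1 ≤ d) (hdm : d ≤ m - 1) (S : Finset ℤ)
    (hS : S = (Finset.Icc (0 : ℤ) d).image (fun a => a * m / d - if a = d then 1 else 0))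
    {x y : ℤ} (hx : 0 ≤ x) (hxy : x ≤ y) (hy : y ≤ m - 1) :
    m * ((S ∩ Icc x y).card : ℤ) ≤ d * (y - x + 1) + m ∧
      (m * ((S ∩ Icc x y).card : ℤ) = d * (y - x + 1) + m → y = m - 1 ∧ m ∣ d * x) := by
  have hm : (0:ℤ) < m := by omega
  have hcard := card_inter_Icc m d hd hdm S hS hx hxy hy
  have hFx : Fc m d (x - 1) = (x * d - 1) / m := by
    have hne : x - 1 ≠ m - 1 := by omega
    unfold Fc
    rw [if_neg hne]
    congr 1
    ring
  have hr0 : 0 ≤ (x * d - 1) % m := Int.emod_nonneg _ (by omega)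
  have hrm : (x * d - 1) % m < m := Int.emod_lt_of_pos _ hm
  have hdm' : m * ((x * d - 1) / m) = x * d - 1 - (x * d - 1) % m := by
    have := Int.mul_ediv_add_emod (x * d - 1) m
    linarith
  by_cases hym : y = m - 1
  · have hFy : Fc m d y = d := by unfold Fc; rw [if_pos hym]
    have hmc : m * ((S ∩ Icc x y).card : ℤ) = m * d - x * d + 1 + (x * d - 1) % m := by
      rw [hcard, hFy, hFx, mul_sub]
      linarith
    have hexp : d * (y - x + 1) + m = m * d - x * d + m := by rw [hym]; ring
    constructor
    · rw [hmc, hexp]; linarith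
    · intro heq
      refine ⟨hym, ?_⟩
      rw [hmc, hexp] at heq
      have hreq : (x * d - 1) % m = m - 1 := by linarith
      have h1 : m ∣ x * d - 1 - (x * d - 1) % m := ⟨(x * d - 1) / m, by linarith⟩
      rw [hreq] at h1
      have h2 : x * d - 1 - (m - 1) = x * d - m := by ring
      rw [h2] at h1
      have h3 : m ∣ x * d := by
        have := dvd_add h1 (dvd_refl m)
        simpa using this
      rwa [mul_comm]
  · have hFy : Fc m d y = ((y + 1) * d - 1) / m := by unfold Fc; rw [if_neg hym]
    have hFyb : m * (((y + 1) * d - 1) / m) ≤ (y + 1) * d - 1 := by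
      have h1 := Int.mul_ediv_add_emod ((y + 1) * d - 1) m
      have h2 := Int.emod_nonneg ((y + 1) * d - 1) (show m ≠ 0 by omega)
      linarith
    have hmc : m * ((S ∩ Icc x y).card : ℤ)
        = m * (((y + 1) * d - 1) / m) - (x * d - 1 - (x * d - 1) % m) := by
      rw [hcard, hFy, hFx, mul_sub]
      linarith
    have hexp : d * (y - x + 1) = (y + 1) * d - x * d := by ring
    constructor
    · rw [hmc]; linarith
    · intro heq
      exfalso
      rw [hmc] at heq
      linarith

private lemma cluster_eq (m d : ℤ) (hd : 1 ≤ d) (hdm : d ≤ m - 1) (S : Finset ℤ)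
    (hS : S = (Finset.Icc (0 : ℤ) d).image (fun a => a * m / d - if a = d then 1 else 0))
    {x : ℤ} (hx : 0 ≤ x) (hxm : x ≤ m - 1) (hdvd : m ∣ d * x) :
    m * ((S ∩ Icc x (m - 1)).card : ℤ) = d * (m - 1 - x + 1) + m := by
  have hm : (0:ℤ) < m := by omega
  have hcard := card_inter_Icc m d hd hdm S hS hx hxm (le_refl (m - 1))
  have hFx : Fc m d (x - 1) = (x * d - 1) / m := by
    have hne : x - 1 ≠ m - 1 := by omega
    unfold Fc
    rw [if_neg hne]
    congr 1
    ring
  have hFy : Fc m d (m - 1) = d := by unfold Fc; rw [if_pos rfl]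
  obtain ⟨c, hc⟩ := hdvd
  have hrw : x * d - 1 = (m - 1) + m * (c - 1) := by
    have : x * d = m * c := by rw [mul_comm]; exact hc
    rw [this]; ring
  have hreq : (x * d - 1) % m = m - 1 := by
    rw [hrw, Int.add_mul_emod_self_left, Int.emod_eq_of_lt (by omega) (by omega)]
  have hdm' : m * ((x * d - 1) / m) = x * d - 1 - (x * d - 1) % m := by
    have := Int.mul_ediv_add_emod (x * d - 1) m
    linarith
  rw [hcard, hFy, hFx, mul_sub]
  have hexp : d * (m - 1 - x + 1) + m = m * d - x * d + m := by ring
  rw [hexp]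
  rw [hreq] at hdm'
  linarith

private lemma c_Icc (x y : ℤ) (hxy : x ≤ y) :
    (Icc x y).filter (fun t => t - 1 ∉ Icc x y) = {x} := by
  ext t
  simp only [mem_filter, mem_Icc, mem_singleton, not_and, not_le]
  omega

private lemma main_ind (m d : ℤ) (hd : 1 ≤ d) (hdm : d ≤ m - 1) (S : Finset ℤ)
    (hS : S = (Finset.Icc (0 : ℤ) d).image (fun a => a * m / d - if a = d then 1 else 0)) :
    ∀ n : ℕ, ∀ T : Finset ℤ, T.card = n → T ⊆ Icc 0 (m - 1) →
      (m * ((S ∩ T).card : ℤ)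
          ≤ d * (T.card : ℤ) + m * ((T.filter (fun t => t - 1 ∉ T)).card : ℤ)) ∧
      ((m * ((S ∩ T).card : ℤ)
          = d * (T.card : ℤ) + m * ((T.filter (fun t => t - 1 ∉ T)).card : ℤ)) →
        T = ∅ ∨ ∃ k, 0 ≤ k ∧ k ≤ m - 1 ∧ m ∣ d * k ∧ T = Icc k (m - 1)) := by
  intro n
  induction n using Nat.strong_induction_on with
  | _ n ih =>
    intro T hcardn hT
    rcases T.eq_empty_or_nonempty with rfl | hne
    · refine ⟨by simp, fun _ => Or.inl rfl⟩
    set y := T.max' hne with hy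
    have hyT : y ∈ T := T.max'_mem hne
    have hyIcc := hT hyT
    rw [mem_Icc] at hyIcc
    have hex : ∃ j : ℕ, (y - (j : ℤ)) ∉ T := by
      refine ⟨(y + 1).toNat, fun hc => ?_⟩
      have h := hT hc
      rw [mem_Icc, Int.toNat_of_nonneg (by omega)] at h
      omega
    set n0 := Nat.find hex with hn0def
    have hn0spec : (y - (n0 : ℤ)) ∉ T := Nat.find_spec hex
    have hmin : ∀ j : ℕ, j < n0 → (y - (j : ℤ)) ∈ T := by
      intro j hj
      have := Nat.find_min hex hj
      simpa using this
    have hn0pos : 0 < n0 := by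
      rcases Nat.eq_zero_or_pos n0 with h0 | h
      · exfalso
        rw [h0] at hn0spec
        simp at hn0spec
        exact hn0spec hyT
      · exact h
    have hn0ge : (1 : ℤ) ≤ (n0 : ℤ) := by exact_mod_cast hn0pos
    set x : ℤ := y - n0 + 1 with hxdef
    have hxy : x ≤ y := by omega
    have hx1 : x - 1 ∉ T := by
      have h : x - 1 = y - n0 := by omega
      rw [h]; exact hn0spec
    have hsub : Icc x y ⊆ T := by
      intro t ht
      rw [mem_Icc] at ht
      have hj : ((y - t).toNat : ℤ) = y - t := Int.toNat_of_nonneg (by omega)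
      have hjlt : (y - t).toNat < n0 := by
        by_contra hc
        push_neg at hc
        have : (n0 : ℤ) ≤ y - t := by
          rw [← hj]; exact_mod_cast hc
        omega
      have := hmin _ hjlt
      rwa [hj, show y - (y - t) = t by ring] at this
    have hx0 : 0 ≤ x := by
      by_contra hc
      push_neg at hc
      have h1 : (-1 : ℤ) ∈ Icc x y := by rw [mem_Icc]; omega
      have h2 := hT (hsub h1)
      rw [mem_Icc] at h2
      omega
    set T' := T.filter (· < x) with hT'def
    have hT'mem : ∀ t, t ∈ T' → 0 ≤ t ∧ t ≤ x - 2 := by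
      intro t ht
      rw [hT'def, mem_filter] at ht
      have h1 := hT ht.1
      rw [mem_Icc] at h1
      have h2 : t ≠ x - 1 := fun h => hx1 (h ▸ ht.1)
      omega
    have hdecomp : T = T' ∪ Icc x y := by
      ext t
      rw [mem_union, hT'def, mem_filter, mem_Icc]
      constructor
      · intro ht
        by_cases hlt : t < x
        · exact Or.inl ⟨ht, hlt⟩
        · exact Or.inr ⟨by omega, T.le_max' t ht⟩
      · rintro (⟨ht, _⟩ | ht)
        · exact ht
        · exact hsub (by rw [mem_Icc]; exact ht)
    have hdisj : Disjoint T' (Icc x y) := by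
      rw [Finset.disjoint_left]
      intro t ht hticc
      rw [mem_Icc] at hticc
      have := (hT'mem t ht).2
      omega
    have hcardIcc : (((Icc x y).card : ℕ) : ℤ) = y - x + 1 := by
      rw [Int.card_Icc, Int.toNat_of_nonneg (by omega)]
      ring
    have hcardT : ((T.card : ℕ) : ℤ) = (T'.card : ℤ) + (y - x + 1) := by
      rw [hdecomp, Finset.card_union_of_disjoint hdisj, Nat.cast_add, hcardIcc]
    have hSsplit : ((S ∩ T).card : ℤ) = ((S ∩ T').card : ℤ) + ((S ∩ Icc x y).card : ℤ) := by
      rw [hdecomp, Finset.inter_union_distrib_left,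
        Finset.card_union_of_disjoint
          (hdisj.mono Finset.inter_subset_right Finset.inter_subset_right),
        Nat.cast_add]
    have hcsplit : T.filter (fun t => t - 1 ∉ T)
        = (T'.filter (fun t => t - 1 ∉ T')) ∪ {x} := by
      ext t
      rw [mem_union, mem_filter, mem_filter, mem_singleton]
      constructor
      · rintro ⟨htT, ht1⟩
        by_cases hlt : t < x
        · left
          have htT' : t ∈ T' := by rw [hT'def, mem_filter]; exact ⟨htT, hlt⟩
          exact ⟨htT', fun hc => ht1 ((Finset.filter_subset _ _) hc)⟩
        · right
          have hty : t ≤ y := T.le_max' t htT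
          by_contra hne'
          have h1 : t - 1 ∈ Icc x y := by rw [mem_Icc]; omega
          exact ht1 (hsub h1)
      · rintro (⟨htT', ht1⟩ | rfl)
        · have htT : t ∈ T := (Finset.filter_subset _ _) htT'
          have hb := hT'mem t htT'
          refine ⟨htT, fun hc => ?_⟩
          have h1 : t - 1 ∈ T' := by rw [hT'def, mem_filter]; exact ⟨hc, by omega⟩
          exact ht1 h1
        · exact ⟨hsub (by rw [mem_Icc]; omega), hx1⟩
    have hxnot : x ∉ T'.filter (fun t => t - 1 ∉ T') := by
      intro hc
      have := hT'mem x ((Finset.filter_subset _ _) hc)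
      omega
    have hccard : ((T.filter (fun t => t - 1 ∉ T)).card : ℤ)
        = ((T'.filter (fun t => t - 1 ∉ T')).card : ℤ) + 1 := by
      rw [hcsplit, Finset.card_union_of_disjoint (Finset.disjoint_singleton_right.mpr hxnot),
        Nat.cast_add, Finset.card_singleton, Nat.cast_one]
    have hT'card : T'.card < n := by
      have h1 : 0 < (Icc x y).card := Finset.card_pos.mpr ⟨x, by rw [mem_Icc]; omega⟩
      have h2 : T.card = T'.card + (Icc x y).card := by
        rw [hdecomp, Finset.card_union_of_disjoint hdisj]
      omega
    have hT'sub : T' ⊆ Icc 0 (m - 1) := by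
      intro t ht
      rw [mem_Icc]
      have h1 := hT'mem t ht
      omega
    obtain ⟨ih1, ih2⟩ := ih T'.card hT'card T' rfl hT'sub
    obtain ⟨cl1, cl2⟩ := cluster_ineq m d hd hdm S hS hx0 hxy hyIcc.2
    constructor
    · rw [hSsplit, hcardT, hccard]
      linarith
    · intro heq
      rw [hSsplit, hcardT, hccard] at heq
      have eq2 : m * ((S ∩ Icc x y).card : ℤ) = d * (y - x + 1) + m := by linarith
      have eq1 : m * ((S ∩ T').card : ℤ)
          = d * (T'.card : ℤ) + m * ((T'.filter (fun t => t - 1 ∉ T')).card : ℤ) := by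
        linarith
      obtain ⟨hym, hdvd⟩ := cl2 eq2
      rcases ih2 eq1 with hempty | ⟨k, hk0, hk1, hkd, hkeq⟩
      · right
        refine ⟨x, hx0, by omega, hdvd, ?_⟩
        rw [hdecomp, hempty, Finset.empty_union, hym]
      · exfalso
        have h1 : (m - 1 : ℤ) ∈ T' := by rw [hkeq, mem_Icc]; omega
        have := hT'mem _ h1
        omega

/-- Equality case of inequality (6.22) of the paper: for `1 ≤ d ≤ m - 1`, with
`S = { ⌊a·m/d⌋ - [a = d] : 0 ≤ a ≤ d }` and a nonempty `T ⊆ {0, …, m-1}`,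
`m·|S ∩ T| = d·|T| + m·c(T)` holds if and only if `T = {k, …, m-1}` for some
`0 ≤ k ≤ m-1` with `m ∣ d·k`. -/
theorem stmt1 (m d : ℤ) (hd : 1 ≤ d) (hdm : d ≤ m - 1)
    (S : Finset ℤ)
    (hS : S = (Finset.Icc (0 : ℤ) d).image (fun a => a * m / d - if a = d then 1 else 0))
    (T : Finset ℤ) (hT : T ⊆ Finset.Icc (0 : ℤ) (m - 1)) (hne : T.Nonempty) :
    m * ((S ∩ T).card : ℤ) =
        d * (T.card : ℤ) + m * ((T.filter (fun t => t - 1 ∉ T)).card : ℤ)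
      ↔ ∃ k : ℤ, 0 ≤ k ∧ k ≤ m - 1 ∧ m ∣ d * k ∧ T = Finset.Icc k (m - 1) := by
  constructor
  · intro h
    rcases (main_ind m d hd hdm S hS T.card T rfl hT).2 h with h0 | hk
    · exact absurd h0 (Finset.nonempty_iff_ne_empty.mp hne)
    · exact hk
  · rintro ⟨k, hk0, hk1, hdvd, rfl⟩
    have h1 := cluster_eq m d hd hdm S hS hk0 hk1 hdvd
    have h2 : (((Icc k (m - 1)).card : ℕ) : ℤ) = m - 1 - k + 1 := by
      rw [Int.card_Icc, Int.toNat_of_nonneg (by omega)]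
      ring
    have h3 := c_Icc k (m - 1) hk1
    rw [h1, h2, h3, Finset.card_singleton, Nat.cast_one]
    ring
end

section
/- Let K be a field, ι and L finite nonempty index sets, and V a K-vector space with basis (v_i)_{i ∈ ι}. Let v = Σ_{i ∈ ι} α_i v_i with α_i ≠ 0 for every i. Let (A_l)_{l ∈ L} be K-linear endomorphisms of V that are simultaneously diagonal in this basis: A_l v_i = λ_{l,i} · v_i for scalars λ_{l,i} ∈ K. Then the family of vectors { (∏_{l ∈ L} A_l^{β(l)}) v : β : L → ℕ } spans V if and only if for every pair of distinct indices i ≠ j in ι there exists l ∈ L with λ_{l,i} ≠ λ_{l,j}. -/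
/-!
In the eigenbasis, `(∏ₗ A_l^{β_l}) v = ∑ₖ αₖ (∏ₗ λ_{l,k}^{β_l}) vₖ`. If `λ_{·,i} = λ_{·,j}` for some
`i ≠ j`, all these vectors lie in the kernel of the functional `αⱼ vᵢ* - αᵢ vⱼ*`, which does not
vanish on `vᵢ`. Conversely their span is stable under every `A_l`, and applying the operators
`A_l - λ_{l,j}` with `l` separating `i` from `j`, for every `j ≠ i`, turns `v` into a nonzero
multiple of `vᵢ`.
-/

open Finset

section

variable {R M L ι : Type*}

theorem Module.End.pow_apply_of_apply_eq_smul [CommSemiring R] [AddCommMonoid M] [Module R M]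
    {f : Module.End R M} {x : M} {μ : R} (h : f x = μ • x) (n : ℕ) : (f ^ n) x = μ ^ n • x := by
  induction n with
  | zero => simp
  | succ n ih => rw [pow_succ', Module.End.mul_apply, ih, map_smul, h, smul_smul, pow_succ]

theorem Finset.noncommProd_apply_of_apply_eq_smul [CommSemiring R] [AddCommMonoid M] [Module R M]
    (s : Finset L) (f : L → Module.End R M) (comm) {x : M} {μ : L → R}
    (h : ∀ l ∈ s, f l x = μ l • x) : s.noncommProd f comm x = (∏ l ∈ s, μ l) • x := by
  classical
  induction s using Finset.induction_on with
  | empty => simp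
  | insert a s ha ih =>
    rw [noncommProd_insert_of_notMem _ _ _ _ ha, Module.End.mul_apply,
      ih _ fun l hl => h l (mem_insert_of_mem hl), map_smul, h a (mem_insert_self a s),
      smul_smul, prod_insert ha, mul_comm]

theorem Module.End.apply_sum_smul_of_apply_eq_smul [CommSemiring R] [AddCommMonoid M]
    [Module R M] [Fintype ι] {f : Module.End R M} {b : ι → M} {μ : ι → R}
    (h : ∀ i, f (b i) = μ i • b i) (c : ι → R) :
    f (∑ i, c i • b i) = ∑ i, (μ i * c i) • b i := by
  simp only [map_sum, map_smul, h, smul_smul, mul_comm]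

theorem Finset.prod_pow_add_single [CommMonoid M] [Fintype L] [DecidableEq L] (a : L → M)
    (β : L → ℕ) (l : L) :
    ∏ l', a l' ^ (β + Pi.single l 1 : L → ℕ) l' = a l * ∏ l', a l' ^ β l' := by
  simp only [Pi.add_apply, pow_add, prod_mul_distrib, Pi.single_apply, pow_ite, pow_one, pow_zero,
    prod_ite_eq', mem_univ, if_true, mul_comm]

end

section Diagonal

variable {K ι L V : Type*} [Field K] [Fintype ι] [AddCommGroup V] [Module K V]
  (B : Module.Basis ι K V)

theorem Module.Basis.mem_of_sum_smul_mem_of_separating {A : L → Module.End K V}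
    {lam : L → ι → K} (hA : ∀ l i, A l (B i) = lam l i • B i)
    (hsep : ∀ i j, i ≠ j → ∃ l, lam l i ≠ lam l j)
    {W : Submodule K V} (hW : ∀ l, ∀ x ∈ W, A l x ∈ W) {c : ι → K}
    (hc : ∑ k, c k • B k ∈ W) {i : ι} (hci : c i ≠ 0) : B i ∈ W := by
  classical
  -- `A l - lam l j` kills the `j`-th coordinate, and keeps the `i`-th one if `l` separates `i`, `j`.
  have kill : ∀ S : Finset ι, i ∉ S →
      ∃ d : ι → K, d i ≠ 0 ∧ (∀ k ∈ S, d k = 0) ∧ ∑ k, d k • B k ∈ W := by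
    intro S
    induction S using Finset.induction_on with
    | empty => exact fun _ => ⟨c, hci, by simp, hc⟩
    | insert j S hj ih =>
      intro hi
      obtain ⟨d, hdi, hdS, hdW⟩ := ih fun h => hi (mem_insert_of_mem h)
      obtain ⟨l, hl⟩ := hsep i j fun h => hi (h ▸ mem_insert_self i S)
      refine ⟨fun k => (lam l k - lam l j) * d k, mul_ne_zero (sub_ne_zero.2 hl) hdi, ?_, ?_⟩
      · intro k hk
        rcases mem_insert.1 hk with rfl | hk
        · simp
        · simp [hdS k hk]
      · have := W.sub_mem (hW l _ hdW) (W.smul_mem (lam l j) hdW)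
        rw [Module.End.apply_sum_smul_of_apply_eq_smul (hA l), smul_sum, ← sum_sub_distrib] at this
        simpa only [sub_mul, sub_smul, smul_smul] using this
  obtain ⟨d, hdi, hd0, hdW⟩ := kill (univ.erase i) (notMem_erase i univ)
  rw [sum_eq_single_of_mem i (mem_univ i) fun k _ hk => by
    simp [hd0 k (mem_erase.2 ⟨hk, mem_univ k⟩)]] at hdW
  exact (W.smul_mem_iff hdi).1 hdW

variable [Fintype L]

/-- `(∏ₗ A_l^{β_l}) v` written in a common eigenbasis `B` of the `A_l`, with eigenvalues `lam`,
where `v = ∑ₖ αₖ Bₖ`. -/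
noncomputable def orbitVector (α : ι → K) (lam : L → ι → K) (β : L → ℕ) : V :=
  ∑ k, (α k * ∏ l, lam l k ^ β l) • B k

theorem span_range_orbitVector_ne_top {α : ι → K} {lam : L → ι → K} {i j : ι}
    (hij : i ≠ j) (hαj : α j ≠ 0) (hlam : ∀ l, lam l i = lam l j) :
    Submodule.span K (Set.range (orbitVector B α lam)) ≠ ⊤ := by
  set φ : V →ₗ[K] K := α j • B.coord i - α i • B.coord j
  have hφ : ∀ c : ι → K, φ (∑ k, c k • B k) = α j * c i - α i * c j := by
    intro c
    simp only [φ, LinearMap.sub_apply, LinearMap.smul_apply, Module.Basis.coord_apply,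
      Module.Basis.repr_sum_self, smul_eq_mul]
  have hle : Submodule.span K (Set.range (orbitVector B α lam)) ≤ LinearMap.ker φ :=
    Submodule.span_le.2 <| by
      rintro _ ⟨β, rfl⟩
      simp only [orbitVector, SetLike.mem_coe, LinearMap.mem_ker, hφ, hlam]
      ring
  intro h
  have : φ (B i) = 0 := hle (h ▸ Submodule.mem_top)
  simp [φ, Ne.symm hij, hαj] at this

theorem apply_orbitVector [DecidableEq L] {A : L → Module.End K V} {lam : L → ι → K}
    (hA : ∀ l i, A l (B i) = lam l i • B i) (α : ι → K) (β : L → ℕ) (l : L) :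
    A l (orbitVector B α lam β) = orbitVector B α lam (β + Pi.single l 1) := by
  simp only [orbitVector, Module.End.apply_sum_smul_of_apply_eq_smul (hA l),
    prod_pow_add_single, mul_left_comm]

theorem apply_mem_span_range_orbitVector {A : L → Module.End K V} {lam : L → ι → K}
    (hA : ∀ l i, A l (B i) = lam l i • B i) {α : ι → K} (l : L) {x : V}
    (hx : x ∈ Submodule.span K (Set.range (orbitVector B α lam))) :
    A l x ∈ Submodule.span K (Set.range (orbitVector B α lam)) := by
  classical
  refine Submodule.mem_comap.1 <| (Submodule.span_le (p := Submodule.comap (A l) _)).2 ?_ hx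
  rintro _ ⟨β, rfl⟩
  exact Submodule.subset_span ⟨β + Pi.single l 1, (apply_orbitVector B hA α β l).symm⟩

end Diagonal

/-- Section 5.3 of the paper: if `V` has basis `(v_i)` with `v = Σ α_i v_i`, all `α_i ≠ 0`,
and `(A_l)` are simultaneously diagonal endomorphisms `A_l v_i = λ_{l,i} v_i`, then the
vectors `(∏_l A_l^{β(l)}) v`, over all `β : L → ℕ`, span `V` iff for any two distinct
basis indices `i ≠ j` some `A_l` has different eigenvalues on `v_i` and `v_j`. -/
theorem stmt3 {K : Type*} [Field K] {ι L : Type*} [Fintype ι] [Fintype L]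
    {V : Type*} [AddCommGroup V] [Module K V] (B : Module.Basis ι K V)
    (α : ι → K) (hα : ∀ i, α i ≠ 0) (v : V) (hv : v = ∑ i, α i • B i)
    (A : L → Module.End K V) (lam : L → ι → K)
    (hA : ∀ l i, A l (B i) = lam l i • B i) :
    Submodule.span K (Set.range (fun β : L → ℕ =>
      (Finset.univ.noncommProd (fun l => (A l) ^ (β l))
        (fun x _ y _ _ =>
          Commute.pow_pow
            (show A x * A y = A y * A x from
              B.ext fun i => by
                simp [Module.End.mul_apply, hA, smul_smul, mul_comm])
            (β x) (β y))) v)) = ⊤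
      ↔ ∀ i j : ι, i ≠ j → ∃ l : L, lam l i ≠ lam l j := by
  have hP : ∀ (β : L → ℕ) comm,
      (univ.noncommProd (fun l => A l ^ β l) comm) v = orbitVector B α lam β := by
    intro β comm
    rw [hv, Module.End.apply_sum_smul_of_apply_eq_smul fun i =>
      univ.noncommProd_apply_of_apply_eq_smul _ comm fun l _ =>
        Module.End.pow_apply_of_apply_eq_smul (hA l i) (β l)]
    simp_rw [orbitVector, mul_comm]
  suffices Submodule.span K (Set.range (orbitVector B α lam)) = ⊤
      ↔ ∀ i j : ι, i ≠ j → ∃ l : L, lam l i ≠ lam l j by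
    convert this using 5 with β
    exact hP β _
  constructor
  · intro h i j hij
    by_contra! hlam
    exact span_range_orbitVector_ne_top B hij (hα j) hlam h
  · intro hsep
    rw [eq_top_iff, ← B.span_eq, Submodule.span_le]
    rintro _ ⟨i, rfl⟩
    exact B.mem_of_sum_smul_mem_of_separating hA hsep
      (fun l _ => apply_mem_span_range_orbitVector B hA l)
      (Submodule.subset_span ⟨0, by simp [orbitVector]⟩) (hα i)
end

section
/- Let K be a field, q ∈ K, n ≥ 1 an integer, and i ≤ j integers. In the polynomial ring K[z_i, …, z_j] define P = ∏_{i ≤ b < a ≤ j, a ≡ b (mod n)} (z_b − q²·z_a) · ∏_{i ≤ a, a+1 < b ≤ j, b ≡ a+1 (mod n)} (z_b − q·z_a) · ∏_{i ≤ b < a ≤ j, b ≡ a+1 (mod n)} (q·z_b − z_a). Let a₀, b₀, c₀ ∈ {i, …, j} be pairwise distinct indices with a₀ ≡ c₀ (mod n) and either b₀ ≡ a₀ + 1 (mod n) or a₀ ≡ b₀ + 1 (mod n). Then for every ζ ∈ K, the polynomial P vanishes under every substitution that sets z_{a₀} = ζ, z_{b₀} = q·ζ, z_{c₀} = q²·ζ,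 the remaining variables taking arbitrary values in K. -/
open MvPolynomial

/-- The wheel conditions (4.6) for the numerator of the shuffle element `X_m`
(case analysis in the proof of Proposition 4.4 of the paper).  The polynomial
`P = ∏_{i ≤ b < a ≤ j, a ≡ b} (z_b − q²z_a) · ∏_{i ≤ a, a+1 < b ≤ j, b ≡ a+1} (z_b − qz_a)
· ∏_{i ≤ b < a ≤ j, b ≡ a+1} (qz_b − z_a)` vanishes under any substitution sending
`z_{a₀} ↦ ζ`, `z_{b₀} ↦ qζ`, `z_{c₀} ↦ q²ζ`, for pairwise distinct indices with
`a₀ ≡ c₀ (mod n)` and `b₀ ≡ a₀ ± 1 (mod n)`. -/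
theorem stmt8 {K : Type*} [Field K] (q : K) (n : ℕ) (hn : 1 ≤ n) (i j : ℤ) (hij : i ≤ j)
    (a₀ b₀ c₀ : ℤ)
    (ha₀ : a₀ ∈ Finset.Icc i j) (hb₀ : b₀ ∈ Finset.Icc i j) (hc₀ : c₀ ∈ Finset.Icc i j)
    (hab : a₀ ≠ b₀) (hbc : b₀ ≠ c₀) (hac : a₀ ≠ c₀)
    (hcong : a₀ % (n : ℤ) = c₀ % (n : ℤ))
    (hb : b₀ % (n : ℤ) = (a₀ + 1) % (n : ℤ) ∨ a₀ % (n : ℤ) = (b₀ + 1) % (n : ℤ))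
    (ζ : K) (σ : ℤ → K) (hσa : σ a₀ = ζ) (hσb : σ b₀ = q * ζ) (hσc : σ c₀ = q ^ 2 * ζ) :
    eval σ (
      (∏ p ∈ (Finset.Icc i j ×ˢ Finset.Icc i j).filter
          (fun p => p.2 < p.1 ∧ p.1 % (n : ℤ) = p.2 % (n : ℤ)),
        (X p.2 - C (q ^ 2) * X p.1)) *
      (∏ p ∈ (Finset.Icc i j ×ˢ Finset.Icc i j).filter
          (fun p => p.1 + 1 < p.2 ∧ p.2 % (n : ℤ) = (p.1 + 1) % (n : ℤ)),
        (X p.2 - C q * X p.1)) *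
      (∏ p ∈ (Finset.Icc i j ×ˢ Finset.Icc i j).filter
          (fun p => p.2 < p.1 ∧ p.2 % (n : ℤ) = (p.1 + 1) % (n : ℤ)),
        (C q * X p.2 - X p.1))) = 0 := by
  rw [map_mul, map_mul]
  have shift : ∀ x y : ℤ, x % (n:ℤ) = y % (n:ℤ) → (x+1) % (n:ℤ) = (y+1) % (n:ℤ) := by
    intro x y h
    rw [Int.add_emod, h, ← Int.add_emod]
  rcases lt_or_gt_of_ne hac with h1 | h1
  · rcases hb with hb | hb
    · rcases lt_or_gt_of_ne hbc with h2 | h2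
      · -- b₀ < c₀ : third product, pair (c₀, b₀)
        apply mul_eq_zero_of_right
        rw [map_prod]
        apply Finset.prod_eq_zero (i := (c₀, b₀))
        · simp only [Finset.mem_filter, Finset.mem_product]
          exact ⟨⟨hc₀, hb₀⟩, h2, hb.trans (shift _ _ hcong)⟩
        · simp [hσb, hσc]; ring
      · -- c₀ < b₀ : second product, pair (a₀, b₀)
        apply mul_eq_zero_of_left
        apply mul_eq_zero_of_right
        rw [map_prod]
        apply Finset.prod_eq_zero (i := (a₀, b₀))
        · simp only [Finset.mem_filter, Finset.mem_product]
          exact ⟨⟨ha₀, hb₀⟩, by omega, hb⟩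
        · simp [hσa, hσb]
    · rcases lt_or_gt_of_ne hab with h2 | h2
      · -- a₀ < b₀ : third product, pair (b₀, a₀)
        apply mul_eq_zero_of_right
        rw [map_prod]
        apply Finset.prod_eq_zero (i := (b₀, a₀))
        · simp only [Finset.mem_filter, Finset.mem_product]
          exact ⟨⟨hb₀, ha₀⟩, h2, hb⟩
        · simp [hσa, hσb]
      · -- b₀ < a₀ < c₀ : second product, pair (b₀, c₀)
        apply mul_eq_zero_of_left
        apply mul_eq_zero_of_right
        rw [map_prod]
        apply Finset.prod_eq_zero (i := (b₀, c₀))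
        · simp only [Finset.mem_filter, Finset.mem_product]
          exact ⟨⟨hb₀, hc₀⟩, by omega, by rw [← hcong]; exact hb⟩
        · simp [hσb, hσc]; ring
  · -- c₀ < a₀ : first product, pair (a₀, c₀)
    apply mul_eq_zero_of_left
    apply mul_eq_zero_of_left
    rw [map_prod]
    apply Finset.prod_eq_zero (i := (a₀, c₀))
    · simp only [Finset.mem_filter, Finset.mem_product]
      exact ⟨⟨ha₀, hc₀⟩, h1, hcong⟩
    · simp [hσa, hσc]
end

section
/- Let m ≥ 1 and d ≥ 1 be integers. Then there is an equality of multisets of integers: { ⌊a·m/(d+m)⌋ − [a = d+m] : 0 ≤ a ≤ d+m } = { ⌊a·m/d⌋ − [a = d] : 0 ≤ a ≤ d } ⊎ {0, 1, …, m−1}, where [a = x] is 1 if a = x and 0 otherwise, the left-hand multiset has d + m + 1 elements counted with multiplicity, and ⊎ denotes disjoint union (sum) of multisets. -/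
lemma aux_lb {m x a : ℤ} (hm : 0 < m) : x ≤ a * m ↔ (x - 1) / m + 1 ≤ a := by
  rw [Int.add_one_le_iff, Int.ediv_lt_iff_lt_mul hm]; omega

lemma aux_ub {m x a : ℤ} (hm : 0 < m) : a * m < x ↔ a ≤ (x - 1) / m := by
  rw [Int.le_ediv_iff_mul_le hm]; omega

lemma aux_filt (m N b : ℤ) (hm : 1 ≤ m) (hN : 1 ≤ N) :
    (Finset.Icc (0:ℤ) N).filter (fun a => a * m / N - (if a = N then 1 else 0) = b)
    = if 0 ≤ b ∧ b ≤ m - 1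
      then Finset.Icc ((b * N - 1) / m + 1) (if b = m - 1 then N else ((b + 1) * N - 1) / m)
      else ∅ := by
  have hN0 : (0:ℤ) < N := hN
  have hm0 : (0:ℤ) < m := hm
  have hU : ∀ c : ℤ, c ≤ m - 2 → ((c + 1) * N - 1) / m ≤ N - 1 := by
    intro c hc
    by_contra h
    have h2 : N ≤ ((c + 1) * N - 1) / m := by omega
    rw [Int.le_ediv_iff_mul_le hm0] at h2
    nlinarith
  ext a
  simp only [Finset.mem_filter, Finset.mem_Icc]
  by_cases haN : a = N
  · rw [if_pos haN, haN, Int.mul_ediv_cancel_left m hN0.ne']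
    by_cases hbm : b = m - 1
    · have hL : (b * N - 1) / m + 1 ≤ N := by
        rw [← aux_lb hm0, hbm]; nlinarith
      rw [if_pos (show 0 ≤ b ∧ b ≤ m - 1 by omega), if_pos hbm, Finset.mem_Icc]
      omega
    · by_cases hb : 0 ≤ b ∧ b ≤ m - 1
      · have := hU b (by omega)
        rw [if_pos hb, if_neg hbm, Finset.mem_Icc]
        omega
      · rw [if_neg hb]
        simp only [Finset.notMem_empty, iff_false]
        rintro ⟨-, h⟩
        omega
  · rw [if_neg haN, sub_zero]
    have key : a * m / N = b ↔ (b * N - 1) / m + 1 ≤ a ∧ a ≤ ((b + 1) * N - 1) / m := by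
      rw [← aux_lb hm0, ← aux_ub hm0, ← Int.le_ediv_iff_mul_le hN0,
        ← Int.ediv_lt_iff_lt_mul hN0]
      omega
    by_cases hb : 0 ≤ b ∧ b ≤ m - 1
    · have hL0 : 0 ≤ (b * N - 1) / m + 1 := by
        have : (-1 : ℤ) ≤ (b * N - 1) / m := by
          rw [Int.le_ediv_iff_mul_le hm0]; nlinarith [hb.1]
        omega
      rw [if_pos hb]
      by_cases hbm : b = m - 1
      · have hUm : ((b + 1) * N - 1) / m = N - 1 := by
          have h1 : (b + 1) * N - 1 = (m - 1) + (N - 1) * m := by rw [hbm]; ring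
          rw [h1, Int.add_mul_ediv_right _ _ hm0.ne',
            Int.ediv_eq_zero_of_lt (by omega) (by omega)]
          ring
        rw [if_pos hbm, Finset.mem_Icc, key, hUm]
        omega
      · have := hU b (by omega)
        rw [if_neg hbm, Finset.mem_Icc, key]
        omega
    · rw [if_neg hb, key]
      simp only [Finset.notMem_empty, iff_false, not_and]
      rintro ⟨ha0, haN'⟩ hLa haU
      have h1 : b * N ≤ a * m := (aux_lb hm0).mpr hLa
      have h2 : a * m < (b + 1) * N := (aux_ub hm0).mpr haU
      apply hb
      constructor
      · by_contra hneg
        have hb1 : b + 1 ≤ 0 := by omega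
        nlinarith [mul_nonneg ha0 hm0.le]
      · by_contra hbig
        have hmb : m ≤ b := by omega
        have hA : a * m ≤ (N - 1) * m :=
          mul_le_mul_of_nonneg_right (by omega) hm0.le
        have hB : m * N ≤ b * N := mul_le_mul_of_nonneg_right hmb hN0.le
        nlinarith
/-- Periodicity of the multiset `S_{i,j,d}` of equation (6.12) of the paper (with `i = 0`,
`j = m − 1`): as multisets,
`{ ⌊a·m/(d+m)⌋ − [a = d+m] : 0 ≤ a ≤ d+m } = { ⌊a·m/d⌋ − [a = d] : 0 ≤ a ≤ d } ⊎ {0, …, m−1}`,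
and the left-hand multiset has `d + m + 1` elements counted with multiplicity.  This encodes
that replacing `d` by `d + (j−i+1)` multiplies the shuffle element `P^d_{[i;j]}` by
`z_i ⋯ z_j`. -/
theorem stmt11 (m d : ℤ) (hm : 1 ≤ m) (hd : 1 ≤ d) :
    ((Finset.Icc (0 : ℤ) (d + m)).val.map
        (fun a => a * m / (d + m) - if a = d + m then 1 else 0)
      = (Finset.Icc (0 : ℤ) d).val.map (fun a => a * m / d - if a = d then 1 else 0)
        + (Finset.Icc (0 : ℤ) (m - 1)).val)
    ∧ ((((Finset.Icc (0 : ℤ) (d + m)).val.map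
        (fun a => a * m / (d + m) - if a = d + m then 1 else 0)).card : ℤ) = d + m + 1) := by
  have hm0 : (0:ℤ) < m := hm
  have hdm : (1:ℤ) ≤ d + m := by omega
  have cm : ∀ (N : ℤ), ∀ b : ℤ,
      ((Finset.Icc (0:ℤ) N).val.map (fun a => a * m / N - if a = N then 1 else 0)).count b
      = ((Finset.Icc (0:ℤ) N).filter
          (fun a => a * m / N - (if a = N then 1 else 0) = b)).card := by
    intro N b
    rw [Multiset.count_map]
    rw [Finset.card_def, Finset.filter_val]
    congr 1
    apply Multiset.filter_congr
    intro x _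
    exact eq_comm
  constructor
  · rw [Multiset.ext]
    intro b
    rw [Multiset.count_add, cm (d + m) b, cm d b, aux_filt m (d + m) b hm hdm,
      aux_filt m d b hm hd]
    by_cases hb : 0 ≤ b ∧ b ≤ m - 1
    · rw [if_pos hb, if_pos hb]
      have hcnt : ((Finset.Icc (0:ℤ) (m - 1)).val).count b = 1 :=
        Multiset.count_eq_one_of_mem (Finset.Icc (0:ℤ) (m-1)).nodup
          (by rw [Finset.mem_val, Finset.mem_Icc]; omega)
      have hshift : (b * (d + m) - 1) / m = (b * d - 1) / m + b := by
        have h1 : b * (d + m) - 1 = (b * d - 1) + b * m := by ring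
        rw [h1, Int.add_mul_ediv_right _ _ hm0.ne']
      by_cases hbm : b = m - 1
      · have hx : (b * d - 1) / m ≤ d := by
          by_contra h
          have h2 : d + 1 ≤ (b * d - 1) / m := by omega
          rw [Int.le_ediv_iff_mul_le hm0, hbm] at h2
          nlinarith
        rw [if_pos hbm, if_pos hbm, Int.card_Icc, Int.card_Icc, hcnt, hshift]
        omega
      · have hshift2 : ((b + 1) * (d + m) - 1) / m = ((b + 1) * d - 1) / m + (b + 1) := by
          have h1 : (b + 1) * (d + m) - 1 = ((b + 1) * d - 1) + (b + 1) * m := by ring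
          rw [h1, Int.add_mul_ediv_right _ _ hm0.ne']
        have hmono : (b * d - 1) / m ≤ ((b + 1) * d - 1) / m :=
          Int.ediv_le_ediv hm0 (by nlinarith)
        rw [if_neg hbm, if_neg hbm, Int.card_Icc, Int.card_Icc, hcnt, hshift, hshift2]
        omega
    · have hcnt : ((Finset.Icc (0:ℤ) (m - 1)).val).count b = 0 :=
        Multiset.count_eq_zero_of_notMem (by rw [Finset.mem_val, Finset.mem_Icc]; omega)
      rw [if_neg hb, if_neg hb, hcnt]
      simp
  · rw [Multiset.card_map]
    have h1 : (Finset.Icc (0:ℤ) (d + m)).val.card = (Finset.Icc (0:ℤ) (d + m)).card := rfl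
    rw [h1, Int.card_Icc]
    omega
end
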